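/- arXiv:2111.00225 — 2 statements merged into one kernel-verified Lean document; each statement's English description precedes it below -/
import Mathlib

section
/- Let k ≥ 2. If φ(0) has depth at least k−1, i.e. φ(0) ∈ range(A^(k−1)), then the eigenpath φ has order at least k at 0: z^(j)(0) = 0 for j = 1, …, k−1, and the vectors W φ^(j)(0) for 0 ≤ j ≤ k−2 are orthogonal to ker(N₀* − conj(z₀)). -/
open Complex MeasureTheory ContinuousLinearMap
open scoped InnerProductSpace

/-- The nilpotent operator `A = K₋₁ ∘ W`, where
`K₋₁ = (2πi)⁻¹ ∮_{|v|=r} v • R(v) dv`. -/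
noncomputable def resA {H : Type*} [NormedAddCommGroup H] [NormedSpace ℂ H]
    (R : ℂ → (H →L[ℂ] H)) (W : H →L[ℂ] H) (r : ℝ) : H →L[ℂ] H :=
  ((2 * (Real.pi : ℂ) * Complex.I)⁻¹ • ∮ v in C(0, r), v • R v) * W

/-!
Pair everything with the conjugate eigenpath: `p_w = ⟪φ*(w), ·⟫` satisfies
`p_w ∘ (N₀ - z₀ + w W) = (z(w) - z₀) p_w`. The Laurent coefficients `c_n` of the resolvent satisfy
`(N₀ - z₀) c_n + W c_{n-1} = δ_{n,0}`, and telescoping these relations against `p_w` gives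
`p_w (W (A x)) ≡ w p_w x` modulo the ideal `(w^(k-1), z(w) - z₀)` of analytic germs at `0`.
Iterating along `φ(0) = A^(k-1) u` and using `w p_w (W φ(0)) = (z(w) - z₀) p_w (φ(0))` yields
`(z(w) - z₀) (p_w (φ(0)) + O(w)) = O(w^k)`; since `p_0 (φ(0)) ≠ 0`, `z - z₀` vanishes to order `k`.
Pairing the eigen-equation with `χ ∈ ker (N₀* - conj z₀)` gives
`w ⟪χ, W φ(w)⟫ = (z(w) - z₀) ⟪χ, φ(w)⟫`, so `⟪χ, W φ(·)⟫` vanishes to order `k - 1`.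
-/

open Metric Filter Topology ComplexConjugate
open scoped Real

lemma AnalyticAt.conj_conj {f : ℂ → ℂ} {x : ℂ} (hf : AnalyticAt ℂ f (conj x)) :
    AnalyticAt ℂ (conj ∘ f ∘ conj) x := by
  rw [Complex.analyticAt_iff_eventually_differentiableAt] at hf ⊢
  filter_upwards [(Complex.continuous_conj.tendsto x).eventually hf] with w hw
  simpa using hw.conj_conj

lemma ContinuousLinearMap.iteratedDeriv_comp_left {𝕜 E F : Type*} [NontriviallyNormedField 𝕜]
    [NormedAddCommGroup E] [NormedSpace 𝕜 E] [NormedAddCommGroup F] [NormedSpace 𝕜 F]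
    (T : E →L[𝕜] F) {f : 𝕜 → E} {x : 𝕜} {i : ℕ} (hf : ContDiffAt 𝕜 i f x) :
    iteratedDeriv i (T ∘ f) x = T (iteratedDeriv i f x) := by
  simp [iteratedDeriv_eq_iteratedFDeriv, T.iteratedFDeriv_comp_left hf le_rfl]

lemma ContinuousLinearMap.circleIntegral_comp_comm {E F : Type*} [NormedAddCommGroup E]
    [NormedSpace ℂ E] [CompleteSpace E] [NormedAddCommGroup F] [NormedSpace ℂ F]
    [CompleteSpace F] (T : E →L[ℂ] F) {f : ℂ → E} {c : ℂ} {R : ℝ}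
    (hf : CircleIntegrable f c R) :
    ∮ z in C(c, R), T (f z) = T (∮ z in C(c, R), f z) := by
  simp only [circleIntegral, ← T.intervalIntegral_comp_comm hf.out, map_smul]

lemma ContinuousOn.of_mul_eq_one {X A : Type*} [TopologicalSpace X] [NormedRing A]
    [HasSummableGeomSeries A] {F G : X → A} {s : Set X} (hF : ContinuousOn F s)
    (hG : ∀ x ∈ s, F x * G x = 1 ∧ G x * F x = 1) : ContinuousOn G s := by
  have hinverse (x) (hx : x ∈ s) : Ring.inverse (F x) = G x :=
    Ring.inverse_unit ⟨F x, G x, (hG x hx).1, (hG x hx).2⟩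
  intro x hx
  have h : ContinuousAt Ring.inverse (F x) :=
    NormedRing.inverse_continuousAt ⟨F x, G x, (hG x hx).1, (hG x hx).2⟩
  exact (h.comp_continuousWithinAt (hF x hx)).congr
    (fun y hy => (hinverse y hy).symm) (hinverse x hx).symm

lemma circleIntegral_zpow_eq_ite {n : ℤ} {r : ℝ} (hr : r ≠ 0) :
    ∮ v in C(0, r), v ^ n = if n = -1 then 2 * π * Complex.I else 0 := by
  split_ifs with hn
  · simpa [hn] using circleIntegral.integral_sub_center_inv 0 hr
  · simpa using circleIntegral.integral_sub_zpow_of_ne hn 0 0 r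

section AnalyticOrder

variable {𝕜 : Type*} [NontriviallyNormedField 𝕜] {z₀ : 𝕜} {n : ℕ}

lemma natCast_le_analyticOrderAt_of_mul_eventuallyEq {f c g : 𝕜 → 𝕜} (hf : AnalyticAt 𝕜 f z₀)
    (hc : AnalyticAt 𝕜 c z₀) (hc₀ : c z₀ ≠ 0) (hg : AnalyticAt 𝕜 g z₀)
    (h : ∀ᶠ w in 𝓝 z₀, f w * c w = (w - z₀) ^ n * g w) : n ≤ analyticOrderAt f z₀ := by
  have hmon : AnalyticAt 𝕜 ((· - z₀) ^ n) z₀ := by fun_prop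
  have hord := analyticOrderAt_congr (f := f * c) (g := (· - z₀) ^ n * g) h
  rw [analyticOrderAt_mul hf hc, analyticOrderAt_mul hmon hg, analyticOrderAt_centeredMonomial,
    analyticOrderAt_eq_zero.2 (.inr hc₀), add_zero] at hord
  exact hord ▸ le_self_add

lemma natCast_le_analyticOrderAt_of_sub_mul_eventuallyEq {f ζ b : 𝕜 → 𝕜}
    (hf : AnalyticAt 𝕜 f z₀) (hζ : AnalyticAt 𝕜 ζ z₀) (hb : AnalyticAt 𝕜 b z₀)
    (hζn : n + 1 ≤ analyticOrderAt ζ z₀) (h : ∀ᶠ w in 𝓝 z₀, (w - z₀) * f w = ζ w * b w) :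
    n ≤ analyticOrderAt f z₀ := by
  have hlin : AnalyticAt 𝕜 (· - z₀) z₀ := by fun_prop
  have hord := analyticOrderAt_congr (f := (· - z₀) * f) (g := ζ * b) h
  rw [analyticOrderAt_mul hlin hf, analyticOrderAt_mul hζ hb, analyticOrderAt_id_sub_const_self,
    add_comm] at hord
  exact (ENat.add_le_add_iff_right ENat.one_ne_top).1 (hord ▸ hζn.trans le_self_add)

lemma iteratedDeriv_eq_zero_of_le_analyticOrderAt_sub [CharZero 𝕜] [CompleteSpace 𝕜]
    {f : 𝕜 → 𝕜} {c : 𝕜} {j : ℕ} (hf : AnalyticAt 𝕜 f z₀)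
    (hn : n ≤ analyticOrderAt (fun v => f v - c) z₀) (hj₀ : j ≠ 0) (hj : j < n) :
    iteratedDeriv j f z₀ = 0 := by
  have h := (natCast_le_analyticOrderAt_iff_iteratedDeriv_eq_zero
    (hf.fun_sub analyticAt_const)).1 hn j hj
  obtain ⟨i, rfl⟩ := Nat.exists_eq_succ_of_ne_zero hj₀
  rwa [iteratedDeriv_succ', funext fun v => deriv_sub_const (f := f) (x := v) c,
    ← iteratedDeriv_succ'] at h

end AnalyticOrder

/-- `f ≡ g` modulo the ideal generated by `a` and `b` in the ring of germs at `0` of analytic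
functions. -/
def AnalyticModEq (a b f g : ℂ → ℂ) : Prop :=
  ∃ γ β : ℂ → ℂ, AnalyticAt ℂ γ 0 ∧ AnalyticAt ℂ β 0 ∧
    ∀ᶠ w in 𝓝 0, f w = g w + a w * γ w + b w * β w

namespace AnalyticModEq

variable {a b f g h : ℂ → ℂ}

theorem refl (a b f : ℂ → ℂ) : AnalyticModEq a b f f :=
  ⟨0, 0, analyticAt_const, analyticAt_const, by simp⟩

theorem trans (h₁ : AnalyticModEq a b f g) (h₂ : AnalyticModEq a b g h) :
    AnalyticModEq a b f h := by
  obtain ⟨γ₁, β₁, hγ₁, hβ₁, h₁⟩ := h₁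
  obtain ⟨γ₂, β₂, hγ₂, hβ₂, h₂⟩ := h₂
  refine ⟨γ₁ + γ₂, β₁ + β₂, hγ₁.add hγ₂, hβ₁.add hβ₂, ?_⟩
  filter_upwards [h₁, h₂] with w hw₁ hw₂
  simp only [Pi.add_apply]
  linear_combination hw₁ + hw₂

theorem mul_left {e : ℂ → ℂ} (he : AnalyticAt ℂ e 0) (hfg : AnalyticModEq a b f g) :
    AnalyticModEq a b (fun w => e w * f w) (fun w => e w * g w) := by
  obtain ⟨γ, β, hγ, hβ, hfg⟩ := hfg
  refine ⟨e * γ, e * β, he.mul hγ, he.mul hβ, ?_⟩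
  filter_upwards [hfg] with w hw
  simp only [Pi.mul_apply]
  linear_combination e w * hw

end AnalyticModEq

/-- `∑ₙ c n • vⁿ` is a right inverse of `T₀ + v • T₁` as a formal Laurent series. -/
def IsFormalRightInverse {A : Type*} [Ring A] (T₀ T₁ : A) (c : ℤ → A) : Prop :=
  ∀ n, T₀ * c n + T₁ * c (n - 1) = if n = 0 then 1 else 0

section Laurent

variable {A : Type*} [NormedRing A] [NormedAlgebra ℂ A] [CompleteSpace A]

/-- The coefficient of `vⁿ` in the Laurent expansion of `R` on an annulus containing `|v| = r`. -/
noncomputable def laurentCoeff (R : ℂ → A) (r : ℝ) (n : ℤ) : A :=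
  (2 * π * Complex.I)⁻¹ • ∮ v in C(0, r), v ^ (-(n + 1)) • R v

theorem isFormalRightInverse_laurentCoeff {T₀ T₁ : A} {R : ℂ → A} {r : ℝ} (hr : 0 < r)
    (hR : ∀ v ∈ sphere (0 : ℂ) r, (T₀ + v • T₁) * R v = 1 ∧ R v * (T₀ + v • T₁) = 1) :
    IsFormalRightInverse T₀ T₁ (laurentCoeff R r) := by
  intro n
  have hRc : ContinuousOn R (sphere 0 r) :=
    (continuousOn_const.add (continuousOn_id.smul continuousOn_const)).of_mul_eq_one hR
  have hint (T : A) (m : ℤ) : CircleIntegrable (fun v => v ^ m • (T * R v)) 0 r := by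
    refine ContinuousOn.circleIntegrable hr.le fun v hv => ?_
    exact ((continuousAt_zpow₀ v m (.inl (ne_of_mem_sphere hv hr.ne'))).continuousWithinAt).smul
      ((continuousOn_const.mul hRc) v hv)
  have hmul (T : A) (m : ℤ) :
      T * ∮ v in C(0, r), v ^ m • R v = ∮ v in C(0, r), v ^ m • (T * R v) := by
    have h := (ContinuousLinearMap.mul ℂ A T).circleIntegral_comp_comm
      (f := fun v => v ^ m • R v) (by simpa using hint 1 m)
    simp only [ContinuousLinearMap.mul_apply', mul_smul_comm] at h
    exact h.symm
  have hsum : T₀ * laurentCoeff R r n + T₁ * laurentCoeff R r (n - 1) =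
      (2 * π * Complex.I)⁻¹ • ∮ v in C(0, r), v ^ (-(n + 1)) • (1 : A) := by
    rw [laurentCoeff, laurentCoeff, mul_smul_comm, mul_smul_comm, ← smul_add, hmul, hmul,
      ← circleIntegral.integral_add (hint _ _) (hint _ _)]
    congr 1
    refine circleIntegral.integral_congr hr.le fun v hv => ?_
    rw [show -(n - 1 + 1) = -(n + 1) + 1 by ring, zpow_add_one₀ (ne_of_mem_sphere hv hr.ne'),
      mul_smul, ← smul_add, ← smul_mul_assoc, ← add_mul, (hR v hv).1]
  rw [hsum, circleIntegral.integral_smul_const, circleIntegral_zpow_eq_ite hr.ne']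
  by_cases hn : n = 0
  · rw [if_pos (by omega), if_pos hn, smul_smul, inv_mul_cancel₀ Complex.two_pi_I_ne_zero,
      one_smul]
  · rw [if_neg (by omega), if_neg hn, zero_smul, smul_zero]

end Laurent

theorem resA_eq_laurentCoeff_mul {H : Type*} [NormedAddCommGroup H] [NormedSpace ℂ H]
    [CompleteSpace H] (R : ℂ → (H →L[ℂ] H)) (W : H →L[ℂ] H) (r : ℝ) :
    resA R W r = laurentCoeff R r (-2) * W := by
  norm_num [resA, laurentCoeff]

section Expansion

variable {H : Type*} [NormedAddCommGroup H] [NormedSpace ℂ H] {T₀ T₁ : H →L[ℂ] H}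
  {c : ℤ → H →L[ℂ] H} {p : ℂ → H →L[ℂ] ℂ} {ζ : ℂ → ℂ}

theorem IsFormalRightInverse.apply (hc : IsFormalRightInverse T₀ T₁ c) (n : ℤ) (x : H) :
    T₀ (c n x) + T₁ (c (n - 1) x) = if n = 0 then x else 0 := by
  have h := congrArg (· x) (hc n)
  split_ifs at h ⊢ <;> simpa using h

/-- A truncation of the expansion of `1 / (v - w)` in powers of `w / v`, hidden in the Laurent
coefficients of the resolvent. -/
theorem IsFormalRightInverse.apply_neg_two_expansion (hc : IsFormalRightInverse T₀ T₁ c)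
    (p : H →L[ℂ] ℂ) {w ζ : ℂ} (hp : ∀ y, p (T₀ y) + w * p (T₁ y) = ζ * p y) (x : H) (m : ℕ) :
    p (T₁ (c (-2) x)) = w * p x - w ^ (m + 1) * p (T₀ (c m x)) -
      ζ * ∑ i ∈ Finset.range (m + 1), w ^ i * p (c (i - 1) x) := by
  induction m with
  | zero =>
    have h₁ := congrArg p (hc.apply (-1) x)
    have h₂ := congrArg p (hc.apply 0 x)
    norm_num at h₁ h₂ ⊢
    linear_combination h₁ + w * h₂ - hp (c (-1) x)
  | succ m ih =>
    have h := congrArg p (hc.apply (m + 1) x)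
    rw [if_neg (by omega), add_sub_cancel_right, map_add, map_zero] at h
    rw [ih, Finset.sum_range_succ _ (m + 1)]
    push_cast
    rw [add_sub_cancel_right]
    linear_combination w ^ (m + 1) * (w * h - hp (c m x))

theorem IsFormalRightInverse.analyticModEq_neg_two (hc : IsFormalRightInverse T₀ T₁ c)
    (hp : ∀ᶠ w in 𝓝 0, ∀ y, p w (T₀ y) + w * p w (T₁ y) = ζ w * p w y)
    (hpa : ∀ y, AnalyticAt ℂ (fun w => p w y) 0) (x : H) (m : ℕ) :
    AnalyticModEq (· ^ (m + 1)) ζ (fun w => p w (T₁ (c (-2) x))) (fun w => w * p w x) := by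
  refine ⟨fun w => -p w (T₀ (c m x)),
    fun w => -∑ i ∈ Finset.range (m + 1), w ^ i * p w (c (i - 1) x),
    (hpa _).neg, (Finset.analyticAt_fun_sum _ fun i _ => (analyticAt_id.pow i).mul (hpa _)).neg,
    ?_⟩
  filter_upwards [hp] with w hw
  rw [hc.apply_neg_two_expansion (p w) hw x m]
  ring

theorem IsFormalRightInverse.analyticModEq_pow (hc : IsFormalRightInverse T₀ T₁ c)
    (hp : ∀ᶠ w in 𝓝 0, ∀ y, p w (T₀ y) + w * p w (T₁ y) = ζ w * p w y)
    (hpa : ∀ y, AnalyticAt ℂ (fun w => p w y) 0) (u : H) (m : ℕ) :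
    ∀ j : ℕ, AnalyticModEq (· ^ (m + 1)) ζ (fun w => p w (T₁ (((c (-2) * T₁) ^ j) u)))
      (fun w => w ^ j * p w (T₁ u))
  | 0 => by simpa using AnalyticModEq.refl _ _ _
  | j + 1 => by
    have hstep := hc.analyticModEq_neg_two hp hpa (T₁ (((c (-2) * T₁) ^ j) u)) m
    have hind := (hc.analyticModEq_pow hp hpa u m j).mul_left analyticAt_id
    simpa [pow_succ', mul_assoc] using hstep.trans hind

theorem IsFormalRightInverse.le_analyticOrderAt (hc : IsFormalRightInverse T₀ T₁ c)
    (hp : ∀ᶠ w in 𝓝 0, ∀ y, p w (T₀ y) + w * p w (T₁ y) = ζ w * p w y)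
    (hpa : ∀ y, AnalyticAt ℂ (fun w => p w y) 0) (hζ : AnalyticAt ℂ ζ 0) {φ₀ u : H}
    (hφ₀ : T₀ φ₀ = 0) {m : ℕ} (hu : ((c (-2) * T₁) ^ (m + 1)) u = φ₀) (hpφ₀ : p 0 φ₀ ≠ 0) :
    (m + 2 : ℕ) ≤ analyticOrderAt ζ 0 := by
  obtain ⟨γ, β, hγ, hβ, h⟩ := hc.analyticModEq_pow hp hpa u m (m + 1)
  refine natCast_le_analyticOrderAt_of_mul_eventuallyEq (c := fun w => p w φ₀ - w * β w)
    (g := fun w => p w (T₁ u) + γ w) hζ ((hpa φ₀).sub (analyticAt_id.mul hβ))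
    (by simpa using hpφ₀) ((hpa _).add hγ) ?_
  filter_upwards [h, hp] with w hw hpw
  have hT₁ : w * p w (T₁ φ₀) = ζ w * p w φ₀ := by simpa [hφ₀] using hpw φ₀
  rw [hu] at hw
  rw [sub_zero]
  linear_combination w * hw - hT₁

end Expansion

section InnerProduct

variable {H : Type*} [NormedAddCommGroup H] [InnerProductSpace ℂ H]

lemma AnalyticAt.inner_comp_conj_left {ψ : ℂ → H} {x : ℂ} (hψ : AnalyticAt ℂ ψ (conj x))
    (y : H) : AnalyticAt ℂ (fun w => ⟪ψ (conj w), y⟫_ℂ) x := by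
  convert (((innerSL ℂ y).analyticAt _).comp hψ).conj_conj using 1
  funext w
  simp

variable [CompleteSpace H]

lemma inner_apply_eq_of_adjoint_apply_eq {T : H →L[ℂ] H} {χ : H} {μ : ℂ}
    (h : adjoint T χ = conj μ • χ) (y : H) : ⟪χ, T y⟫_ℂ = μ * ⟪χ, y⟫_ℂ := by
  rw [← adjoint_inner_left, h, inner_smul_left, Complex.conj_conj]

theorem inner_iteratedDeriv_eq_zero_of_le_analyticOrderAt {N₀ W : H →L[ℂ] H} {z : ℂ → ℂ}
    {φ : ℂ → H} {z₀ : ℂ} {n j : ℕ} (hφ : AnalyticAt ℂ φ 0) (hz : AnalyticAt ℂ z 0)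
    (heig : ∀ᶠ v in 𝓝 0, (N₀ + v • W) (φ v) = z v • φ v)
    (hn : n + 1 ≤ analyticOrderAt (fun v => z v - z₀) 0) {χ : H}
    (hχ : adjoint N₀ χ = conj z₀ • χ) (hj : j < n) : ⟪χ, W (iteratedDeriv j φ 0)⟫_ℂ = 0 := by
  set T : H →L[ℂ] ℂ := (innerSL ℂ χ).comp W
  have hTφ : AnalyticAt ℂ (T ∘ φ) 0 := (T.analyticAt _).comp hφ
  have hord : n ≤ analyticOrderAt (T ∘ φ) 0 := by
    refine natCast_le_analyticOrderAt_of_sub_mul_eventuallyEq hTφ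
      (hz.fun_sub analyticAt_const) (((innerSL ℂ χ).analyticAt _).comp hφ) hn ?_
    filter_upwards [heig] with v hv
    have h := congrArg (⟪χ, ·⟫_ℂ) hv
    simp only [add_apply, smul_apply, inner_add_right, inner_smul_right,
      inner_apply_eq_of_adjoint_apply_eq hχ] at h
    simp only [T, Function.comp_apply, comp_apply, innerSL_apply_apply, sub_zero]
    linear_combination h
  have h := (natCast_le_analyticOrderAt_iff_iteratedDeriv_eq_zero hTφ).1 hord j hj
  rwa [T.iteratedDeriv_comp_left hφ.contDiffAt] at h

end InnerProduct

theorem depth_implies_order_general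
    {H : Type*} [NormedAddCommGroup H] [InnerProductSpace ℂ H] [CompleteSpace H]
    (N₀ W : H →L[ℂ] H)
    (z₀ : ℂ) (r : ℝ) (hr : 0 < r)
    (R : ℂ → (H →L[ℂ] H))
    (hR : ∀ v : ℂ, v ≠ 0 → ‖v‖ ≤ r →
      (N₀ + v • W - z₀ • (1 : H →L[ℂ] H)) * R v = 1 ∧
      R v * (N₀ + v • W - z₀ • (1 : H →L[ℂ] H)) = 1)
    (ρ : ℝ) (hρ : 0 < ρ)
    (z : ℂ → ℂ) (φ : ℂ → H)
    (hz : AnalyticOnNhd ℂ z (Metric.ball (0 : ℂ) ρ))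
    (hφ : AnalyticOnNhd ℂ φ (Metric.ball (0 : ℂ) ρ))
    (heig : ∀ v ∈ Metric.ball (0 : ℂ) ρ, (N₀ + v • W) (φ v) = z v • φ v)
    (hz0 : z 0 = z₀)
    -- the conjugate eigenpath `φ*(v) = ψ(conj v)` with `ψ` analytic
    (ψ : ℂ → H) (hψ : AnalyticOnNhd ℂ ψ (Metric.ball (0 : ℂ) ρ))
    (heigψ : ∀ v ∈ Metric.ball (0 : ℂ) ρ,
      adjoint (N₀ + v • W) (ψ ((starRingEnd ℂ) v)) =
        (starRingEnd ℂ) (z v) • ψ ((starRingEnd ℂ) v))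
    (hpair : ⟪ψ 0, φ 0⟫_ℂ ≠ 0)
    (k : ℕ) (hk : 2 ≤ k)
    (hdepth : φ 0 ∈ Set.range ⇑(resA R W r ^ (k - 1))) :
    (∀ j : ℕ, 1 ≤ j → j < k → iteratedDeriv j z 0 = 0) ∧
    (∀ j : ℕ, j + 2 ≤ k → ∀ χ : H, adjoint N₀ χ = (starRingEnd ℂ) z₀ • χ →
      ⟪χ, W (iteratedDeriv j φ 0)⟫_ℂ = 0) := by
  obtain ⟨n, rfl⟩ : ∃ n, k = n + 2 := ⟨k - 2, by omega⟩
  obtain ⟨u, hu⟩ := hdepth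
  have h0 : (0 : ℂ) ∈ ball (0 : ℂ) ρ := mem_ball_self hρ
  have hc : IsFormalRightInverse (N₀ - z₀ • 1) W (laurentCoeff R r) := by
    refine isFormalRightInverse_laurentCoeff hr fun v hv => ?_
    rw [sub_add_eq_add_sub]
    exact hR v (ne_of_mem_sphere hv hr.ne') (mem_sphere_zero_iff_norm.1 hv).le
  have hp : ∀ᶠ w in 𝓝 0, ∀ y, innerSL ℂ (ψ (conj w)) ((N₀ - z₀ • 1) y) +
      w * innerSL ℂ (ψ (conj w)) (W y) = (z w - z₀) * innerSL ℂ (ψ (conj w)) y := by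
    filter_upwards [ball_mem_nhds 0 hρ] with w hw y
    have h := inner_apply_eq_of_adjoint_apply_eq (heigψ w hw) y
    simp only [innerSL_apply_apply, sub_apply, add_apply, smul_apply, one_apply_eq_self,
      inner_sub_right, inner_add_right, inner_smul_right] at h ⊢
    linear_combination h
  have hpa (y : H) : AnalyticAt ℂ (fun w => innerSL ℂ (ψ (conj w)) y) 0 :=
    AnalyticAt.inner_comp_conj_left (hψ _ (by simpa using h0)) y
  have hφ₀ : (N₀ - z₀ • 1) (φ 0) = 0 := by simpa [hz0, sub_eq_zero] using heig 0 h0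
  have hord := hc.le_analyticOrderAt hp hpa ((hz 0 h0).fun_sub analyticAt_const) hφ₀
    (by rwa [← resA_eq_laurentCoeff_mul]) (by simpa using hpair)
  exact ⟨fun j hj₁ hj => iteratedDeriv_eq_zero_of_le_analyticOrderAt_sub (hz 0 h0) hord
      (by omega) hj,
    fun j hj χ hχ => inner_iteratedDeriv_eq_zero_of_le_analyticOrderAt (hφ 0 h0) (hz 0 h0)
      (eventually_of_mem (ball_mem_nhds 0 hρ) heig) hord hχ (by omega)⟩

/-- if `φ(0)` has depth at least `k-1` (i.e. `φ(0) ∈ range A^(k-1)`), then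
the eigenpath `φ` has order at least `k` at `0`:
`z^(j)(0) = 0` for `j = 1, …, k-1` and `W φ^(j)(0) ⟂ ker (N₀* - conj z₀)` for
`0 ≤ j ≤ k-2`. -/
theorem depth_implies_order
    {H : Type*} [NormedAddCommGroup H] [InnerProductSpace ℂ H] [CompleteSpace H]
    (N₀ W : H →L[ℂ] H) (hW : IsSelfAdjoint W)
    (z₀ : ℂ) (r : ℝ) (hr : 0 < r)
    (R : ℂ → (H →L[ℂ] H))
    (hR : ∀ v : ℂ, v ≠ 0 → ‖v‖ ≤ r →
      (N₀ + v • W - z₀ • (1 : H →L[ℂ] H)) * R v = 1 ∧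
      R v * (N₀ + v • W - z₀ • (1 : H →L[ℂ] H)) = 1)
    (ρ : ℝ) (hρ : 0 < ρ)
    (z : ℂ → ℂ) (φ : ℂ → H)
    (hz : AnalyticOnNhd ℂ z (Metric.ball (0 : ℂ) ρ))
    (hφ : AnalyticOnNhd ℂ φ (Metric.ball (0 : ℂ) ρ))
    (heig : ∀ v ∈ Metric.ball (0 : ℂ) ρ, (N₀ + v • W) (φ v) = z v • φ v)
    (hφ0 : φ 0 ≠ 0) (hz0 : z 0 = z₀)
    -- the conjugate eigenpath `φ*(v) = ψ(conj v)` with `ψ` analytic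
    (ψ : ℂ → H) (hψ : AnalyticOnNhd ℂ ψ (Metric.ball (0 : ℂ) ρ))
    (heigψ : ∀ v ∈ Metric.ball (0 : ℂ) ρ,
      adjoint (N₀ + v • W) (ψ ((starRingEnd ℂ) v)) =
        (starRingEnd ℂ) (z v) • ψ ((starRingEnd ℂ) v))
    (hpair : ⟪ψ 0, φ 0⟫_ℂ ≠ 0)
    (k : ℕ) (hk : 2 ≤ k)
    (hdepth : φ 0 ∈ Set.range ⇑(resA R W r ^ (k - 1))) :
    (∀ j : ℕ, 1 ≤ j → j < k → iteratedDeriv j z 0 = 0) ∧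
    (∀ j : ℕ, j + 2 ≤ k → ∀ χ : H, adjoint N₀ χ = (starRingEnd ℂ) z₀ • χ →
      ⟪χ, W (iteratedDeriv j φ 0)⟫_ℂ = 0) :=
  depth_implies_order_general N₀ W z₀ r hr R hR ρ hρ z φ hz hφ heig hz0 ψ hψ heigψ hpair k hk hdepth
end

section
/- If the eigenpath φ has order exactly k at 0 (equivalently z^(j)(0) = 0 for j = 1, …, k−1 and z^(k)(0) ≠ 0), then the k vectors W φ(0), W φ'(0), …, W φ^(k−1)(0) are linearly independent in ℋ. Consequently, if W has finite rank, then k ≤ rank(W): an eigenpath cannot have order greater than the rank of W. -/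
open ContinuousLinearMap
open scoped InnerProductSpace

/-!
Differentiating `(N₀ + v W) φ v = z v • φ v` at `0` gives `(N₀ - z₀) φ⁽ⁿ⁾ = -n W φ⁽ⁿ⁻¹⁾` for
`n < k` and `(N₀ - z₀) φ⁽ᵏ⁾ + k W φ⁽ᵏ⁻¹⁾ = z⁽ᵏ⁾(0) φ(0)`; the same holds for `ψ`, an eigenpath of
the adjoint family `N₀† + w W†` whose eigenvalue `conj ∘ z ∘ conj` has the same order. Pairing the
two, `bᵢⱼ = ⟪ψ⁽ⁱ⁾(0), W φ⁽ʲ⁾(0)⟫` satisfies `j bᵢ,ⱼ₋₁ = i bᵢ₋₁,ⱼ` for `i, j < k`, and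
`k b₀,ₖ₋₁ = z⁽ᵏ⁾(0) ⟪ψ(0), φ(0)⟫ ≠ 0`. So `b` vanishes strictly above the antidiagonal
`i + j = k - 1` and not on it: the functionals `⟪ψ⁽ᵏ⁻¹⁻ⁱ⁾(0), ·⟫` are triangular with nonzero
diagonal on the vectors `W φ⁽ʲ⁾(0)`, which are therefore linearly independent.
-/

open Filter Topology
open scoped ComplexConjugate

section IteratedDeriv

variable {𝕜 : Type*} [NontriviallyNormedField 𝕜] {E : Type*} [NormedAddCommGroup E]
  [NormedSpace 𝕜 E] {F : Type*} [NormedAddCommGroup F] [NormedSpace 𝕜 F] {n : ℕ} {x : 𝕜}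

theorem ContinuousLinearMap.iteratedDeriv_comp_left_s15 (L : E →L[𝕜] F) {f : 𝕜 → E}
    (hf : ContDiffAt 𝕜 n f x) :
    iteratedDeriv n (fun y => L (f y)) x = L (iteratedDeriv n f x) := by
  simp only [iteratedDeriv_eq_iteratedFDeriv]
  rw [show (fun y => L (f y)) = L ∘ f from rfl, L.iteratedFDeriv_comp_left hf le_rfl]
  rfl

theorem iteratedDeriv_fun_smul {c : 𝕜 → 𝕜} {f : 𝕜 → E} (hc : ContDiffAt 𝕜 n c x)
    (hf : ContDiffAt 𝕜 n f x) :
    iteratedDeriv n (fun y => c y • f y) x = ∑ i ∈ .range (n + 1),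
      n.choose i • iteratedDeriv i c x • iteratedDeriv (n - i) f x := by
  rw [show (fun y => c y • f y) = c • f from rfl]
  simpa using iteratedDerivWithin_smul (Set.mem_univ x) uniqueDiffOn_univ
    hc.contDiffWithinAt hf.contDiffWithinAt

theorem iteratedDeriv_id_smul_zero {f : 𝕜 → E} (hf : ContDiffAt 𝕜 n f 0) :
    iteratedDeriv n (fun y => y • f y) 0 = n • iteratedDeriv (n - 1) f 0 := by
  rw [iteratedDeriv_fun_smul (c := fun y => y) contDiffAt_id hf]
  rcases n with _ | n
  · simp
  · rw [Finset.sum_eq_single 1]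
    · simp [iteratedDeriv_fun_id_zero]
    · intro i _ hi
      simp [iteratedDeriv_fun_id_zero, hi]
    · simp

variable {A B : E →L[𝕜] E} {f : 𝕜 → E} {μ : 𝕜 → 𝕜}

-- At `n = 0` the truncated `n - 1` is harmless: its term carries the factor `n`.
theorem iteratedDeriv_eigenpath (hf : ContDiffAt 𝕜 n f 0) (hμ : ContDiffAt 𝕜 n μ 0)
    (heig : (fun v => (A + v • B) (f v)) =ᶠ[𝓝 0] fun v => μ v • f v) :
    A (iteratedDeriv n f 0) + n • B (iteratedDeriv (n - 1) f 0) = ∑ i ∈ .range (n + 1),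
      n.choose i • iteratedDeriv i μ 0 • iteratedDeriv (n - i) f 0 := by
  have hAf : ContDiffAt 𝕜 n (fun v => A (f v)) 0 := by fun_prop
  have hBf : ContDiffAt 𝕜 n (fun v => B (f v)) 0 := by fun_prop
  have hvBf : ContDiffAt 𝕜 n (fun v => v • B (f v)) 0 := by fun_prop
  have h := heig.iteratedDeriv_eq n
  simp only [add_apply, smul_apply] at h
  rwa [iteratedDeriv_fun_add hAf hvBf, iteratedDeriv_id_smul_zero hBf,
    A.iteratedDeriv_comp_left_s15 hf, B.iteratedDeriv_comp_left_s15 (hf.of_le (by norm_cast; omega)),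
    iteratedDeriv_fun_smul hμ hf] at h

theorem iteratedDeriv_eigenpath_of_flat (hf : ContDiffAt 𝕜 n f 0) (hμ : ContDiffAt 𝕜 n μ 0)
    (heig : (fun v => (A + v • B) (f v)) =ᶠ[𝓝 0] fun v => μ v • f v) (hn : 1 ≤ n)
    (hflat : ∀ m, 1 ≤ m → m < n → iteratedDeriv m μ 0 = 0) :
    A (iteratedDeriv n f 0) + n • B (iteratedDeriv (n - 1) f 0) =
      μ 0 • iteratedDeriv n f 0 + iteratedDeriv n μ 0 • f 0 := by
  rw [iteratedDeriv_eigenpath hf hμ heig, Finset.sum_eq_add 0 n (by omega)]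
  · simp
  · intro m hm hm0
    rw [hflat m (by omega) (by grind), zero_smul, smul_zero]
  all_goals simp

theorem iteratedDeriv_eigenpath_of_lt_order (hf : ContDiffAt 𝕜 n f 0)
    (hμ : ContDiffAt 𝕜 n μ 0) (heig : (fun v => (A + v • B) (f v)) =ᶠ[𝓝 0] fun v => μ v • f v)
    (hflat : ∀ m, 1 ≤ m → m ≤ n → iteratedDeriv m μ 0 = 0) :
    A (iteratedDeriv n f 0) + n • B (iteratedDeriv (n - 1) f 0) = μ 0 • iteratedDeriv n f 0 := by
  rcases Nat.eq_zero_or_pos n with rfl | hn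
  · simpa using iteratedDeriv_eigenpath (n := 0) hf hμ heig
  · rw [iteratedDeriv_eigenpath_of_flat hf hμ heig hn fun m h1 h2 => hflat m h1 h2.le,
      hflat n hn le_rfl, zero_smul, add_zero]

end IteratedDeriv

theorem iteratedDeriv_conj_conj (f : ℂ → ℂ) (n : ℕ) :
    iteratedDeriv n (conj ∘ f ∘ conj) = conj ∘ iteratedDeriv n f ∘ conj := by
  induction n with
  | zero => simp
  | succ n ih => rw [iteratedDeriv_succ, iteratedDeriv_succ, ih, deriv_conj_conj]

theorem AnalyticOnNhd.conj_conj {f : ℂ → ℂ} {s : Set ℂ} (hs : IsOpen s)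
    (hf : AnalyticOnNhd ℂ f s) : AnalyticOnNhd ℂ (conj ∘ f ∘ conj) (conj ⁻¹' s) :=
  DifferentiableOn.analyticOnNhd
    (fun _ hu => (differentiableAt_conj_conj_iff.mpr (hf _ hu).differentiableAt)
      |>.differentiableWithinAt)
    (hs.preimage Complex.continuous_conj)

section Hankel

variable {K : Type*} [Field K] [CharZero K] {k : ℕ} {b : ℕ → ℕ → K}

theorem hankel_eq_zero_of_add_lt
    (hrel : ∀ i j, i < k → j < k → (j : K) * b i (j - 1) = i * b (i - 1) j) :
    ∀ i j, i + j + 1 < k → b i j = 0 := by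
  intro i
  induction i with
  | zero =>
    intro j hj
    simpa [Nat.cast_add_one_ne_zero] using hrel 0 (j + 1) (by omega) (by omega)
  | succ i ih =>
    intro j hj
    have h := hrel (i + 1) (j + 1) (by omega) (by omega)
    simpa [ih (j + 1) (by omega), Nat.cast_add_one_ne_zero] using h

theorem hankel_ne_zero_of_add_eq
    (hrel : ∀ i j, i < k → j < k → (j : K) * b i (j - 1) = i * b (i - 1) j)
    (hbase : b 0 (k - 1) ≠ 0) :
    ∀ i j, i + j + 1 = k → b i j ≠ 0 := by
  intro i
  induction i with
  | zero =>
    intro j hj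
    rwa [show j = k - 1 by omega]
  | succ i ih =>
    intro j hj
    have h := hrel (i + 1) (j + 1) (by omega) (by omega)
    simp only [add_tsub_cancel_right, Nat.cast_add_one] at h
    have hne := mul_ne_zero (Nat.cast_add_one_ne_zero i) (ih (j + 1) (by omega))
    rw [← h] at hne
    exact right_ne_zero_of_mul hne

end Hankel

theorem linearIndependent_of_triangular_pairing {R V ι : Type*} [CommRing R] [IsDomain R]
    [AddCommGroup V] [Module R V] [Fintype ι] [LinearOrder ι] {v : ι → V} (ℓ : ι → V →ₗ[R] R)
    (hzero : ∀ i j, j < i → ℓ i (v j) = 0) (hdiag : ∀ i, ℓ i (v i) ≠ 0) :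
    LinearIndependent R v := by
  classical
  rw [Fintype.linearIndependent_iff]
  intro g hg
  let M : Matrix ι ι R := .of fun i j => ℓ i (v j)
  have hdet : M.det ≠ 0 := by
    rw [Matrix.det_of_isUpperTriangular (M := M) (fun i j hji => hzero i j hji)]
    exact Finset.prod_ne_zero_iff.mpr fun i _ => hdiag i
  have hMg : M.mulVec g = 0 := by
    ext i
    simpa [M, Matrix.mulVec, dotProduct, mul_comm] using congrArg (ℓ i) hg
  exact congrFun (Matrix.eq_zero_of_mulVec_eq_zero hdet hMg)

theorem LinearIndependent.card_le_finrank_range {R M N ι : Type*} [Ring R] [StrongRankCondition R]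
    [AddCommGroup M] [Module R M] [AddCommGroup N] [Module R N] [Fintype ι] {f : M →ₗ[R] N}
    {u : ι → M} [Module.Finite R (LinearMap.range f)]
    (hli : LinearIndependent R fun i => f (u i)) :
    Fintype.card ι ≤ Module.finrank R (LinearMap.range f) := by
  have hli' : LinearIndependent R fun i =>
      (⟨f (u i), LinearMap.mem_range_self f (u i)⟩ : LinearMap.range f) :=
    .of_comp (LinearMap.range f).subtype hli
  exact hli'.fintype_card_le_finrank

section Pairing

variable {H : Type*} [NormedAddCommGroup H] [InnerProductSpace ℂ H] [CompleteSpace H]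
  {A B : H →L[ℂ] H} {φ ψ : ℂ → H} {μ ν : ℂ → ℂ}

theorem inner_iteratedDeriv_eigenpaths_hankel {i j : ℕ}
    (hφ : ContDiffAt ℂ j φ 0) (hμ : ContDiffAt ℂ j μ 0)
    (heigφ : (fun v => (A + v • B) (φ v)) =ᶠ[𝓝 0] fun v => μ v • φ v)
    (hflatμ : ∀ m, 1 ≤ m → m ≤ j → iteratedDeriv m μ 0 = 0)
    (hψ : ContDiffAt ℂ i ψ 0) (hν : ContDiffAt ℂ i ν 0)
    (heigψ : (fun w => (adjoint A + w • adjoint B) (ψ w)) =ᶠ[𝓝 0] fun w => ν w • ψ w)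
    (hflatν : ∀ m, 1 ≤ m → m ≤ i → iteratedDeriv m ν 0 = 0) (hν0 : ν 0 = conj (μ 0)) :
    (j : ℂ) * ⟪iteratedDeriv i ψ 0, B (iteratedDeriv (j - 1) φ 0)⟫_ℂ =
      i * ⟪iteratedDeriv (i - 1) ψ 0, B (iteratedDeriv j φ 0)⟫_ℂ := by
  have hφj := iteratedDeriv_eigenpath_of_lt_order hφ hμ heigφ hflatμ
  have hψi := iteratedDeriv_eigenpath_of_lt_order hψ hν heigψ hflatν
  rw [← Nat.cast_smul_eq_nsmul ℂ] at hφj hψi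
  have key := adjoint_inner_left A (iteratedDeriv j φ 0) (iteratedDeriv i ψ 0)
  rw [eq_sub_of_add_eq hφj, eq_sub_of_add_eq hψi] at key
  simp only [inner_sub_left, inner_sub_right, inner_smul_left, inner_smul_right,
    adjoint_inner_left, hν0, Complex.conj_conj, Complex.conj_natCast] at key
  linear_combination key

theorem inner_iteratedDeriv_eigenpath_at_order {k : ℕ} {x : H}
    (hφ : ContDiffAt ℂ k φ 0) (hμ : ContDiffAt ℂ k μ 0)
    (heigφ : (fun v => (A + v • B) (φ v)) =ᶠ[𝓝 0] fun v => μ v • φ v) (hk : 1 ≤ k)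
    (hflat : ∀ m, 1 ≤ m → m < k → iteratedDeriv m μ 0 = 0)
    (hx : adjoint A x = conj (μ 0) • x) :
    (k : ℂ) * ⟪x, B (iteratedDeriv (k - 1) φ 0)⟫_ℂ = iteratedDeriv k μ 0 * ⟪x, φ 0⟫_ℂ := by
  have hφk := iteratedDeriv_eigenpath_of_flat hφ hμ heigφ hk hflat
  rw [← Nat.cast_smul_eq_nsmul ℂ] at hφk
  have key := adjoint_inner_left A (iteratedDeriv k φ 0) x
  rw [eq_sub_of_add_eq hφk, hx] at key
  simp only [inner_sub_right, inner_add_right, inner_smul_left, inner_smul_right,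
    Complex.conj_conj] at key
  linear_combination key

theorem linearIndependent_iteratedDeriv_eigenpath {k : ℕ}
    (hφ : ContDiffAt ℂ k φ 0) (hμ : ContDiffAt ℂ k μ 0)
    (heigφ : (fun v => (A + v • B) (φ v)) =ᶠ[𝓝 0] fun v => μ v • φ v)
    (hψ : ContDiffAt ℂ k ψ 0) (hν : ContDiffAt ℂ k ν 0)
    (heigψ : (fun w => (adjoint A + w • adjoint B) (ψ w)) =ᶠ[𝓝 0] fun w => ν w • ψ w)
    (hν0 : ν 0 = conj (μ 0)) (hpair : ⟪ψ 0, φ 0⟫_ℂ ≠ 0) (hk : 1 ≤ k)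
    (hflatμ : ∀ m, 1 ≤ m → m < k → iteratedDeriv m μ 0 = 0)
    (hflatν : ∀ m, 1 ≤ m → m < k → iteratedDeriv m ν 0 = 0)
    (hμk : iteratedDeriv k μ 0 ≠ 0) :
    LinearIndependent ℂ (fun j : Fin k => B (iteratedDeriv j φ 0)) := by
  set b : ℕ → ℕ → ℂ := fun i j => ⟪iteratedDeriv i ψ 0, B (iteratedDeriv j φ 0)⟫_ℂ
  have hrel : ∀ i j, i < k → j < k → (j : ℂ) * b i (j - 1) = i * b (i - 1) j :=
    fun i j hi hj => inner_iteratedDeriv_eigenpaths_hankel (hφ.of_le (by norm_cast; omega))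
      (hμ.of_le (by norm_cast; omega)) heigφ (fun m h1 h2 => hflatμ m h1 (by omega))
      (hψ.of_le (by norm_cast; omega)) (hν.of_le (by norm_cast; omega)) heigψ
      (fun m h1 h2 => hflatν m h1 (by omega)) hν0
  have hbase : b 0 (k - 1) ≠ 0 := by
    have h := inner_iteratedDeriv_eigenpath_at_order hφ hμ heigφ hk hflatμ (x := ψ 0)
      (by simpa [hν0] using heigψ.eq_of_nhds)
    change (k : ℂ) * b 0 (k - 1) = _ at h
    intro hb
    rw [hb, mul_zero] at h
    exact mul_ne_zero hμk hpair h.symm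
  exact linearIndependent_of_triangular_pairing (fun i => innerₛₗ ℂ (iteratedDeriv i.rev ψ 0))
    (fun i j hji => hankel_eq_zero_of_add_lt hrel _ _ (by simp [Fin.val_rev]; omega))
    (fun i => hankel_ne_zero_of_add_eq hrel hbase _ _ (by simp [Fin.val_rev]; omega))

theorem eventuallyEq_adjoint_eigenpath {z : ℂ → ℂ} {ρ : ℝ} (hρ : 0 < ρ)
    (heig : ∀ v ∈ Metric.ball (0 : ℂ) ρ,
      adjoint (A + v • B) (ψ (conj v)) = conj (z v) • ψ (conj v)) :
    (fun w => (adjoint A + w • adjoint B) (ψ w)) =ᶠ[𝓝 0] fun w => (conj ∘ z ∘ conj) w • ψ w := by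
  filter_upwards [Metric.ball_mem_nhds 0 hρ] with w hw
  simpa [map_add, map_smulₛₗ] using heig (conj w) (by simpa using hw)

end Pairing

theorem order_le_rank_of_perturbation_general
    {H : Type*} [NormedAddCommGroup H] [InnerProductSpace ℂ H] [CompleteSpace H]
    (N₀ W : H →L[ℂ] H)
    (ρ : ℝ) (hρ : 0 < ρ)
    (z : ℂ → ℂ) (φ : ℂ → H)
    (hz : AnalyticOnNhd ℂ z (Metric.ball (0 : ℂ) ρ))
    (hφ : AnalyticOnNhd ℂ φ (Metric.ball (0 : ℂ) ρ))
    (heig : ∀ v ∈ Metric.ball (0 : ℂ) ρ, (N₀ + v • W) (φ v) = z v • φ v)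
    -- the conjugate eigenpath `φ*(v) = ψ(conj v)` with `ψ` analytic
    (ψ : ℂ → H) (hψ : AnalyticOnNhd ℂ ψ (Metric.ball (0 : ℂ) ρ))
    (heigψ : ∀ v ∈ Metric.ball (0 : ℂ) ρ,
      adjoint (N₀ + v • W) (ψ ((starRingEnd ℂ) v)) =
        (starRingEnd ℂ) (z v) • ψ ((starRingEnd ℂ) v))
    (hpair : ⟪ψ 0, φ 0⟫_ℂ ≠ 0)
    (k : ℕ) (hk : 1 ≤ k)
    -- `φ` has order exactly `k` at `0`
    (horder : (∀ j : ℕ, 1 ≤ j → j < k → iteratedDeriv j z 0 = 0) ∧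
      iteratedDeriv k z 0 ≠ 0) :
    LinearIndependent ℂ (fun j : Fin k => W (iteratedDeriv (j : ℕ) φ 0)) ∧
    (∀ _ : FiniteDimensional ℂ (LinearMap.range (W : H →ₗ[ℂ] H)),
      k ≤ Module.finrank ℂ (LinearMap.range (W : H →ₗ[ℂ] H))) := by
  have h0 : (0 : ℂ) ∈ Metric.ball (0 : ℂ) ρ := Metric.mem_ball_self hρ
  have hζ : AnalyticAt ℂ (conj ∘ z ∘ conj) 0 := hz.conj_conj Metric.isOpen_ball 0 (by simpa)
  have hli : LinearIndependent ℂ (fun j : Fin k => W (iteratedDeriv j φ 0)) :=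
    linearIndependent_iteratedDeriv_eigenpath (hφ 0 h0).contDiffAt (hz 0 h0).contDiffAt
      (eventually_of_mem (Metric.ball_mem_nhds 0 hρ) heig) (hψ 0 h0).contDiffAt hζ.contDiffAt
      (eventuallyEq_adjoint_eigenpath hρ heigψ) (by simp) hpair hk horder.1
      (fun m h1 h2 => by simp [iteratedDeriv_conj_conj, horder.1 m h1 h2]) horder.2
  exact ⟨hli, fun _ => by simpa using hli.card_le_finrank_range⟩

/-- if the eigenpath `φ` has order exactly `k` at `0` (equivalently
`z^(j)(0) = 0` for `j = 1, …, k-1` and `z^(k)(0) ≠ 0`), then the vectors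
`W φ(0), W φ'(0), …, W φ^(k-1)(0)` are linearly independent; consequently, if `W` has
finite rank, then `k ≤ rank W`. -/
theorem order_le_rank_of_perturbation
    {H : Type*} [NormedAddCommGroup H] [InnerProductSpace ℂ H] [CompleteSpace H]
    (N₀ W : H →L[ℂ] H) (hW : IsSelfAdjoint W)
    (z₀ : ℂ) (r : ℝ) (hr : 0 < r)
    (R : ℂ → (H →L[ℂ] H))
    (hR : ∀ v : ℂ, v ≠ 0 → ‖v‖ ≤ r →
      (N₀ + v • W - z₀ • (1 : H →L[ℂ] H)) * R v = 1 ∧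
      R v * (N₀ + v • W - z₀ • (1 : H →L[ℂ] H)) = 1)
    (ρ : ℝ) (hρ : 0 < ρ)
    (z : ℂ → ℂ) (φ : ℂ → H)
    (hz : AnalyticOnNhd ℂ z (Metric.ball (0 : ℂ) ρ))
    (hφ : AnalyticOnNhd ℂ φ (Metric.ball (0 : ℂ) ρ))
    (heig : ∀ v ∈ Metric.ball (0 : ℂ) ρ, (N₀ + v • W) (φ v) = z v • φ v)
    (hφ0 : φ 0 ≠ 0) (hz0 : z 0 = z₀)
    -- the conjugate eigenpath `φ*(v) = ψ(conj v)` with `ψ` analytic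
    (ψ : ℂ → H) (hψ : AnalyticOnNhd ℂ ψ (Metric.ball (0 : ℂ) ρ))
    (heigψ : ∀ v ∈ Metric.ball (0 : ℂ) ρ,
      adjoint (N₀ + v • W) (ψ ((starRingEnd ℂ) v)) =
        (starRingEnd ℂ) (z v) • ψ ((starRingEnd ℂ) v))
    (hpair : ⟪ψ 0, φ 0⟫_ℂ ≠ 0)
    (k : ℕ) (hk : 1 ≤ k)
    -- `φ` has order exactly `k` at `0`
    (horder : (∀ j : ℕ, 1 ≤ j → j < k → iteratedDeriv j z 0 = 0) ∧
      iteratedDeriv k z 0 ≠ 0) :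
    LinearIndependent ℂ (fun j : Fin k => W (iteratedDeriv (j : ℕ) φ 0)) ∧
    (∀ _ : FiniteDimensional ℂ (LinearMap.range (W : H →ₗ[ℂ] H)),
      k ≤ Module.finrank ℂ (LinearMap.range (W : H →ₗ[ℂ] H))) :=
  order_le_rank_of_perturbation_general N₀ W ρ hρ z φ hz hφ heig ψ hψ heigψ hpair k hk horder
end
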